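/- In the variable-length source encryption setting with i.i.d. source p_X and i.i.d. key p_K, if a rate R is δ-admissible for some δ > 0, then H(p_K) ≥ H(p_X). -/

import Mathlib

/-- Base-2 Shannon entropy of the pushforward of `p` under `f`. -/
noncomputable def entF {Ω β : Type*} [Fintype Ω] [DecidableEq β]
    (p : Ω → ℝ) (f : Ω → β) : ℝ :=
  -∑ b ∈ Finset.image f Finset.univ,
    (∑ ω ∈ Finset.univ.filter (fun ω => f ω = b), p ω) *
      Real.logb 2 (∑ ω ∈ Finset.univ.filter (fun ω => f ω = b), p ω)

/-- i.i.d. product distribution on `𝒳ⁿ`. -/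
noncomputable def prodP {𝒳 : Type*} (p : 𝒳 → ℝ) {n : ℕ} (x : Fin n → 𝒳) : ℝ :=
  ∏ i, p (x i)

/-- Expected codeword (ciphertext) length `E[|Φ(Kⁿ, Xⁿ)|]` for an i.i.d. source
`pX` and i.i.d. key `pK`. -/
noncomputable def ELen {𝒳 : Type*} [Fintype 𝒳] [DecidableEq 𝒳] (pK pX : 𝒳 → ℝ)
    {n : ℕ} (Φ : (Fin n → 𝒳) → (Fin n → 𝒳) → List Bool) : ℝ :=
  ∑ k, ∑ x, prodP pK k * prodP pX x * ((Φ k x).length : ℝ)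

/-- Mutual-information leakage `I(C⁽ⁿ⁾; Xⁿ)` where `C⁽ⁿ⁾ = Φ(Kⁿ, Xⁿ)`,
`Kⁿ ∼ pK^n` and `Xⁿ ∼ pX^n` independent (base-2). -/
noncomputable def MIleak {𝒳 : Type*} [Fintype 𝒳] [DecidableEq 𝒳] (pK pX : 𝒳 → ℝ)
    {n : ℕ} (Φ : (Fin n → 𝒳) → (Fin n → 𝒳) → List Bool) : ℝ :=
  entF (fun ω : (Fin n → 𝒳) × (Fin n → 𝒳) => prodP pK ω.1 * prodP pX ω.2)
      (fun ω => Φ ω.1 ω.2)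
    + entF (fun ω : (Fin n → 𝒳) × (Fin n → 𝒳) => prodP pK ω.1 * prodP pX ω.2)
      (fun ω => ω.2)
    - entF (fun ω : (Fin n → 𝒳) × (Fin n → 𝒳) => prodP pK ω.1 * prodP pX ω.2)
      (fun ω => (Φ ω.1 ω.2, ω.2))

/-- `R` is `δ`-admissible: there is a sequence of encryption/decryption pairs
with perfect decryption such that for every `γ > 0`, eventually
`(1/n)·E[|Φ_K⁽ⁿ⁾(Xⁿ)|] ≤ R + γ` and `I(C⁽ⁿ⁾; Xⁿ) ≤ δ`. -/
def Admissible {𝒳 : Type*} [Fintype 𝒳] [DecidableEq 𝒳] (pX pK : 𝒳 → ℝ)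
    (δ R : ℝ) : Prop :=
  ∃ Φ : (n : ℕ) → (Fin n → 𝒳) → (Fin n → 𝒳) → List Bool,
    ∃ Ψ : (n : ℕ) → (Fin n → 𝒳) → List Bool → (Fin n → 𝒳),
      (∀ n k x, Ψ n k (Φ n k x) = x) ∧
      ∀ γ : ℝ, 0 < γ → ∃ n₀ : ℕ, ∀ n ≥ n₀,
        (1 / (n : ℝ)) * ELen pK pX (Φ n) ≤ R + γ ∧ MIleak pK pX (Φ n) ≤ δ

/-!
Let `C = Φ_K(X)` with perfect decryption `X = Ψ_K(C)`. Then `(C, X)` is a function of `(C, K)`,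
so `H(C, X) ≤ H(C, K) ≤ H(C) + H(K)` by monotonicity and subadditivity of entropy, and
`I(C; X) = H(C) + H(X) - H(C, X) ≥ H(X) - H(K)`. For i.i.d. `Xⁿ` and `Kⁿ` the right-hand side is
`n (H(p_X) - H(p_K))`; it stays below the fixed `δ` for all large `n` only if `H(p_X) ≤ H(p_K)`.
-/

open Finset Real

section FiberMass

variable {Ω β γ : Type*} [Fintype Ω] [DecidableEq β] [DecidableEq γ]

noncomputable def fiberMass (p : Ω → ℝ) (f : Ω → β) (b : β) : ℝ :=
  ∑ ω ∈ univ.filter (fun ω => f ω = b), p ω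

lemma entF_eq_neg_sum_image (p : Ω → ℝ) (f : Ω → β) :
    entF p f = -∑ b ∈ univ.image f, fiberMass p f b * logb 2 (fiberMass p f b) :=
  rfl

lemma sum_image_fiberMass_mul (p : Ω → ℝ) (f : Ω → β) (h : β → ℝ) :
    ∑ b ∈ univ.image f, fiberMass p f b * h b = ∑ ω, p ω * h (f ω) := by
  rw [← sum_fiberwise_of_maps_to (g := f) (fun ω _ => mem_image_of_mem f (mem_univ ω))]
  refine sum_congr rfl fun b _ => ?_
  rw [fiberMass, sum_mul]
  exact sum_congr rfl fun ω hω => by rw [(mem_filter.mp hω).2]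

lemma sum_image_fiberMass (p : Ω → ℝ) (f : Ω → β) :
    ∑ b ∈ univ.image f, fiberMass p f b = ∑ ω, p ω := by
  simpa using sum_image_fiberMass_mul p f 1

lemma entF_eq_neg_sum (p : Ω → ℝ) (f : Ω → β) :
    entF p f = -∑ ω, p ω * logb 2 (fiberMass p f (f ω)) := by
  rw [entF_eq_neg_sum_image, sum_image_fiberMass_mul p f fun b => logb 2 (fiberMass p f b)]

variable {p : Ω → ℝ}

lemma fiberMass_nonneg (hp : ∀ ω, 0 ≤ p ω) (f : Ω → β) (b : β) : 0 ≤ fiberMass p f b :=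
  sum_nonneg fun ω _ => hp ω

lemma le_fiberMass_self (hp : ∀ ω, 0 ≤ p ω) (f : Ω → β) (ω : Ω) : p ω ≤ fiberMass p f (f ω) :=
  single_le_sum (fun ω _ => hp ω) (mem_filter.mpr ⟨mem_univ ω, rfl⟩)

lemma fiberMass_le_fiberMass_comp (hp : ∀ ω, 0 ≤ p ω) (g : Ω → γ) (φ : γ → β) (c : γ) :
    fiberMass p g c ≤ fiberMass p (fun ω => φ (g ω)) (φ c) :=
  sum_le_sum_of_subset_of_nonneg (fun ω hω => by simp_all) fun ω _ _ => hp ω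

lemma entF_comp_le (hp : ∀ ω, 0 ≤ p ω) (g : Ω → γ) (φ : γ → β) :
    entF p (fun ω => φ (g ω)) ≤ entF p g := by
  rw [entF_eq_neg_sum, entF_eq_neg_sum, neg_le_neg_iff]
  refine sum_le_sum fun ω _ => ?_
  rcases (hp ω).eq_or_lt with h0 | h0
  · simp [← h0]
  · exact mul_le_mul_of_nonneg_left (logb_le_logb_of_le one_lt_two
      (h0.trans_le (le_fiberMass_self hp g ω)) (fiberMass_le_fiberMass_comp hp g φ (g ω))) h0.le

end FiberMass

lemma sum_mul_logb_le_sum_mul_logb {ι : Type*} (s : Finset ι) {p q : ι → ℝ}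
    (hp : ∀ i ∈ s, 0 ≤ p i) (hq : ∀ i ∈ s, 0 ≤ q i) (hpq : ∀ i ∈ s, 0 < p i → 0 < q i)
    (hp1 : ∑ i ∈ s, p i = 1) (hq1 : ∑ i ∈ s, q i ≤ 1) :
    ∑ i ∈ s, p i * logb 2 (q i) ≤ ∑ i ∈ s, p i * logb 2 (p i) := by
  have hterm : ∀ i ∈ s, p i * log (q i) - p i * log (p i) ≤ q i - p i := by
    intro i hi
    rcases (hp i hi).eq_or_lt with h0 | h0
    · simpa [← h0] using hq i hi
    · have hq := hpq i hi h0
      have := mul_le_mul_of_nonneg_left (log_le_sub_one_of_pos (div_pos hq h0)) h0.le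
      rw [log_div hq.ne' h0.ne', mul_sub, mul_sub, mul_div_cancel₀ _ h0.ne', mul_one] at this
      linarith
  have hlog : ∑ i ∈ s, p i * log (q i) ≤ ∑ i ∈ s, p i * log (p i) := by
    have := sum_le_sum hterm
    rw [sum_sub_distrib, sum_sub_distrib, hp1] at this
    linarith
  simp only [logb, ← mul_div_assoc, ← sum_div]
  exact div_le_div_of_nonneg_right hlog (log_nonneg one_le_two)

section Subadditivity

variable {Ω β γ : Type*} [Fintype Ω] [DecidableEq β] [DecidableEq γ] {p : Ω → ℝ}

lemma entF_pair_le (hp : ∀ ω, 0 ≤ p ω) (hp1 : ∑ ω, p ω = 1) (f : Ω → β) (g : Ω → γ) :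
    entF p (fun ω => (f ω, g ω)) ≤ entF p f + entF p g := by
  set fg : Ω → β × γ := fun ω => (f ω, g ω)
  set J := fiberMass p fg
  set F := fiberMass p f
  set G := fiberMass p g
  have hJF : ∀ bc, J bc ≤ F bc.1 := fiberMass_le_fiberMass_comp hp fg Prod.fst
  have hJG : ∀ bc, J bc ≤ G bc.2 := fiberMass_le_fiberMass_comp hp fg Prod.snd
  have hFG_nonneg : ∀ bc : β × γ, 0 ≤ F bc.1 * G bc.2 := fun bc =>
    mul_nonneg (fiberMass_nonneg hp f _) (fiberMass_nonneg hp g _)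
  have hF : entF p f = -∑ bc ∈ univ.image fg, J bc * logb 2 (F bc.1) := by
    rw [entF_eq_neg_sum, sum_image_fiberMass_mul p fg fun bc => logb 2 (F bc.1)]
  have hG : entF p g = -∑ bc ∈ univ.image fg, J bc * logb 2 (G bc.2) := by
    rw [entF_eq_neg_sum, sum_image_fiberMass_mul p fg fun bc => logb 2 (G bc.2)]
  have hFG1 : ∑ bc ∈ univ.image fg, F bc.1 * G bc.2 ≤ 1 := calc
    _ ≤ ∑ bc ∈ univ.image f ×ˢ univ.image g, F bc.1 * G bc.2 :=
      sum_le_sum_of_subset_of_nonneg (by grind) fun bc _ _ => hFG_nonneg bc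
    _ = 1 := by
      rw [sum_product, ← sum_mul_sum, sum_image_fiberMass, sum_image_fiberMass, hp1, one_mul]
  have hGibbs := sum_mul_logb_le_sum_mul_logb (univ.image fg)
    (fun bc _ => fiberMass_nonneg hp fg bc) (fun bc _ => hFG_nonneg bc)
    (fun bc _ hJ => mul_pos (hJ.trans_le (hJF bc)) (hJ.trans_le (hJG bc)))
    (by rw [sum_image_fiberMass, hp1]) hFG1
  have hsplit : ∀ bc ∈ univ.image fg, J bc * logb 2 (F bc.1 * G bc.2)
      = J bc * logb 2 (F bc.1) + J bc * logb 2 (G bc.2) := by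
    intro bc _
    rcases (fiberMass_nonneg hp fg bc).eq_or_lt with h0 | h0
    · simp [J, ← h0]
    · rw [logb_mul (h0.trans_le (hJF bc)).ne' (h0.trans_le (hJG bc)).ne', mul_add]
  rw [sum_congr rfl hsplit, sum_add_distrib] at hGibbs
  rw [entF_eq_neg_sum_image, hF, hG]
  linarith

end Subadditivity

noncomputable def shannonEntropy {α : Type*} [Fintype α] (p : α → ℝ) : ℝ :=
  -∑ a, p a * logb 2 (p a)

lemma entF_sub_entF_le_of_decrypt {Ω κ ξ γ : Type*} [Fintype Ω] [DecidableEq κ] [DecidableEq ξ]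
    [DecidableEq γ] {p : Ω → ℝ} (hp : ∀ ω, 0 ≤ p ω) (hp1 : ∑ ω, p ω = 1)
    (K : Ω → κ) (X : Ω → ξ) (C : Ω → γ) (Ψ : κ → γ → ξ) (hdec : ∀ ω, Ψ (K ω) (C ω) = X ω) :
    entF p X - entF p K ≤ entF p C + entF p X - entF p (fun ω => (C ω, X ω)) := by
  have hCX : entF p (fun ω => (C ω, X ω)) ≤ entF p (fun ω => (C ω, K ω)) := by
    simpa only [hdec] using entF_comp_le hp (fun ω => (C ω, K ω)) fun ck => (ck.1, Ψ ck.2 ck.1)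
  linarith [entF_pair_le hp hp1 C K]

lemma entF_mul_fst {α β : Type*} [Fintype α] [Fintype β] [DecidableEq α] (P : α → ℝ) (Q : β → ℝ)
    (hQ : ∑ b, Q b = 1) :
    entF (fun ω : α × β => P ω.1 * Q ω.2) (fun ω => ω.1) = shannonEntropy P := by
  have hmass : ∀ a, fiberMass (fun ω : α × β => P ω.1 * Q ω.2) (fun ω => ω.1) a = P a := by
    intro a
    simp [fiberMass, sum_filter, Fintype.sum_prod_type, ← mul_sum, hQ]
  simp only [shannonEntropy, entF_eq_neg_sum, hmass, Fintype.sum_prod_type,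
    mul_right_comm _ (Q _), ← mul_sum, hQ, mul_one]

lemma entF_mul_snd {α β : Type*} [Fintype α] [Fintype β] [DecidableEq β] (P : α → ℝ) (Q : β → ℝ)
    (hP : ∑ a, P a = 1) :
    entF (fun ω : α × β => P ω.1 * Q ω.2) (fun ω => ω.2) = shannonEntropy Q := by
  have hmass : ∀ b, fiberMass (fun ω : α × β => P ω.1 * Q ω.2) (fun ω => ω.2) b = Q b := by
    intro b
    simp [fiberMass, sum_filter, Fintype.sum_prod_type, ← sum_mul, hP]
  simp only [shannonEntropy, entF_eq_neg_sum, hmass, Fintype.sum_prod_type, mul_assoc,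
    ← mul_sum, ← sum_mul, hP, one_mul]

lemma mul_mul_logb_mul (c a b : ℝ) :
    a * b * logb c (a * b) = b * (a * logb c a) + a * (b * logb c b) := by
  have h : a * b * log (a * b) = b * (a * log a) + a * (b * log b) := by
    have := negMulLog_mul a b
    simp only [negMulLog] at this
    linarith
  simp only [logb, ← mul_div_assoc, h]
  ring

lemma prodP_nonneg {𝒳 : Type*} {p : 𝒳 → ℝ} (hp : ∀ a, 0 ≤ p a) {n : ℕ} (x : Fin n → 𝒳) :
    0 ≤ prodP p x :=
  prod_nonneg fun i _ => hp (x i)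

lemma prodP_cons {𝒳 : Type*} (p : 𝒳 → ℝ) {n : ℕ} (a : 𝒳) (y : Fin n → 𝒳) :
    prodP p (Fin.cons a y) = p a * prodP p y := by
  simp [prodP, Fin.prod_univ_succ]

section IID

variable {𝒳 : Type*} [Fintype 𝒳] {p : 𝒳 → ℝ}

lemma sum_prodP (hp1 : ∑ a, p a = 1) (n : ℕ) : ∑ x : Fin n → 𝒳, prodP p x = 1 := by
  simp only [prodP, ← Fintype.prod_sum, hp1, prod_const_one]

lemma shannonEntropy_prodP (hp1 : ∑ a, p a = 1) :
    ∀ n : ℕ, shannonEntropy (prodP p : (Fin n → 𝒳) → ℝ) = n * shannonEntropy p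
  | 0 => by simp [shannonEntropy, prodP]
  | n + 1 => by
    have ih : ∑ y : Fin n → 𝒳, prodP p y * logb 2 (prodP p y) = n * ∑ a, p a * logb 2 (p a) := by
      have := shannonEntropy_prodP hp1 n
      simp only [shannonEntropy] at this
      linarith
    simp only [shannonEntropy]
    rw [← (Fin.consEquiv fun _ => 𝒳).sum_comp, Fintype.sum_prod_type]
    simp only [Fin.consEquiv, Equiv.coe_fn_mk, prodP_cons, mul_mul_logb_mul, sum_add_distrib,
      ← mul_sum, ← sum_mul, hp1, sum_prodP hp1, ih]
    push_cast
    ring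

end IID

lemma nat_mul_sub_le_MIleak {𝒳 : Type*} [Fintype 𝒳] [DecidableEq 𝒳] {pX pK : 𝒳 → ℝ}
    (hpX : ∀ x, 0 ≤ pX x) (hpX1 : ∑ x, pX x = 1) (hpK : ∀ k, 0 ≤ pK k) (hpK1 : ∑ k, pK k = 1)
    {n : ℕ} (Φ : (Fin n → 𝒳) → (Fin n → 𝒳) → List Bool)
    (Ψ : (Fin n → 𝒳) → List Bool → (Fin n → 𝒳)) (hdec : ∀ k x, Ψ k (Φ k x) = x) :
    n * (shannonEntropy pX - shannonEntropy pK) ≤ MIleak pK pX Φ := by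
  have hw : ∀ ω : (Fin n → 𝒳) × (Fin n → 𝒳), 0 ≤ prodP pK ω.1 * prodP pX ω.2 := fun ω =>
    mul_nonneg (prodP_nonneg hpK _) (prodP_nonneg hpX _)
  have hw1 : ∑ ω : (Fin n → 𝒳) × (Fin n → 𝒳), prodP pK ω.1 * prodP pX ω.2 = 1 := by
    rw [Fintype.sum_prod_type, ← sum_mul_sum, sum_prodP hpK1, sum_prodP hpX1, one_mul]
  have hbound := entF_sub_entF_le_of_decrypt hw hw1 (fun ω => ω.1) (fun ω => ω.2)
    (fun ω => Φ ω.1 ω.2) Ψ fun ω => hdec ω.1 ω.2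
  rw [entF_mul_fst _ _ (sum_prodP hpX1 n), entF_mul_snd _ _ (sum_prodP hpK1 n),
    shannonEntropy_prodP hpK1, shannonEntropy_prodP hpX1] at hbound
  rw [MIleak, entF_mul_snd _ _ (sum_prodP hpK1 n), shannonEntropy_prodP hpX1]
  linarith

lemma nonpos_of_forall_nat_mul_le {a δ : ℝ} {n₀ : ℕ} (h : ∀ n ≥ n₀, (n : ℝ) * a ≤ δ) : a ≤ 0 := by
  by_contra! ha
  obtain ⟨m, hm⟩ := exists_nat_gt (δ / a)
  have hmax : (m : ℝ) ≤ (max n₀ m : ℕ) := by exact_mod_cast le_max_right n₀ m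
  have := h (max n₀ m) (le_max_left n₀ m)
  rw [div_lt_iff₀ ha] at hm
  nlinarith

theorem stmt_14_general {𝒳 : Type*} [Fintype 𝒳] [DecidableEq 𝒳] (pX pK : 𝒳 → ℝ)
    (hpX : ∀ x, 0 ≤ pX x) (hpX1 : ∑ x, pX x = 1)
    (hpK : ∀ k, 0 ≤ pK k) (hpK1 : ∑ k, pK k = 1)
    (δ R : ℝ) (hadm : Admissible pX pK δ R) :
    (-∑ x, pX x * Real.logb 2 (pX x)) ≤ -∑ k, pK k * Real.logb 2 (pK k) := by
  obtain ⟨Φ, Ψ, hdec, hadm⟩ := hadm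
  obtain ⟨n₀, hn₀⟩ := hadm 1 one_pos
  have hleak : ∀ n ≥ n₀, (n : ℝ) * (shannonEntropy pX - shannonEntropy pK) ≤ δ := fun n hn =>
    (nat_mul_sub_le_MIleak hpX hpX1 hpK hpK1 (Φ n) (Ψ n) (hdec n)).trans (hn₀ n hn).2
  exact sub_nonpos.mp (nonpos_of_forall_nat_mul_le hleak)

/-- Converse (key rate): if some rate `R` is `δ`-admissible for some `δ > 0`,
then `H(p_K) ≥ H(p_X)`. -/
theorem stmt_14 {𝒳 : Type*} [Fintype 𝒳] [DecidableEq 𝒳] (pX pK : 𝒳 → ℝ)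
    (hpX : ∀ x, 0 ≤ pX x) (hpX1 : ∑ x, pX x = 1)
    (hpK : ∀ k, 0 ≤ pK k) (hpK1 : ∑ k, pK k = 1)
    (δ R : ℝ) (hδ : 0 < δ) (hadm : Admissible pX pK δ R) :
    (-∑ x, pX x * Real.logb 2 (pX x)) ≤ -∑ k, pK k * Real.logb 2 (pK k) :=
  stmt_14_general pX pK hpX hpX1 hpK hpK1 δ R hadm
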